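/- arXiv:1806.11026 — 7 statements merged into one kernel-verified Lean document; each statement's English description precedes it below -/
import Mathlib

section
/- Mirror coupling is optimal for monotone observables (Corollary on mirror coupling): Let V : ℝ → ℝ be differentiable with ∫_ℝ e^{−V(x)} dx < ∞, let f : ℝ → ℝ be continuous, monotonically nondecreasing, with x ↦ f(x)e^{−V(x)} Lebesgue-integrable on ℝ and ∫_ℝ f(x)e^{−V(x)} dx = 0, and let φ : ℝ → ℝ be twice differentiable with φ''(x) − V′(x)φ′(x) = −f(x) for all x ∈ ℝ and φ′(x)e^{−V(x)} → 0 as x → −∞. Assume ∫_ℝ |φ′(x)| e^{−V(x)} dx < ∞. Then for every measurable α : ℝ × ℝ → ℝ with −1 ≤ α(x,y) ≤ 1 for all (x,y), one has −∫_{ℝ²} φ′(x)φ′(y) e^{−(V(x)+V(y))} dx dy ≤ ∫_{ℝ²} α(x,y) φ′(x)φ′(y) e^{−(V(x)+V(y))} dx dy. -/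
open MeasureTheory Real Filter

/-- Mirror coupling (`α ≡ -1`) is optimal for monotone observables: for the solution `φ`
of the 1d Poisson equation `φ'' - V'φ' = -f` with nondecreasing centred `f`, the constant
coupling `-1` minimises `δσ²(α) = ∫ α(x,y) φ'(x) φ'(y) e^{-(V(x)+V(y))} dx dy` over all
measurable `α` with `-1 ≤ α ≤ 1`. -/
theorem mirror_coupling_optimal_monotone
    (V V' f φ φ' φ'' : ℝ → ℝ)
    (hV : ∀ x, HasDerivAt V (V' x) x)
    (hVint : Integrable (fun x => Real.exp (-V x)))
    (hf_cont : Continuous f) (hf_mono : Monotone f)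
    (hfint : Integrable (fun x => f x * Real.exp (-V x)))
    (hfzero : (∫ x : ℝ, f x * Real.exp (-V x)) = 0)
    (hφd : ∀ x, HasDerivAt φ (φ' x) x)
    (hφd' : ∀ x, HasDerivAt φ' (φ'' x) x)
    (hPoisson : ∀ x, φ'' x - V' x * φ' x = -f x)
    (hdecay : Tendsto (fun x => φ' x * Real.exp (-V x)) atBot (nhds 0))
    (hφint : Integrable (fun x => |φ' x| * Real.exp (-V x))) :
    ∀ α : ℝ × ℝ → ℝ, Measurable α → (∀ p : ℝ × ℝ, -1 ≤ α p ∧ α p ≤ 1) →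
      -(∫ p : ℝ × ℝ, φ' p.1 * φ' p.2 * Real.exp (-(V p.1 + V p.2)))
        ≤ ∫ p : ℝ × ℝ, α p * (φ' p.1 * φ' p.2) * Real.exp (-(V p.1 + V p.2)) := by
  intro α hαm hαb
  set g : ℝ → ℝ := fun x => φ' x * Real.exp (-V x) with hg
  -- derivative of g
  have hgd : ∀ x, HasDerivAt g (-(f x * Real.exp (-V x))) x := by
    intro x
    have h1 : HasDerivAt (fun x => Real.exp (-V x)) (Real.exp (-V x) * (-V' x)) x := by
      have := ((hV x).neg).exp
      simpa using this
    have := (hφd' x).fun_mul h1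
    refine this.congr_deriv ?_
    have hp := hPoisson x
    rw [show f x = V' x * φ' x - φ'' x by linarith]
    nlinarith [Real.exp_pos (-V x)]
  -- g x = -∫_{Iic x} f e^{-V}
  have hint_Iic : ∀ x : ℝ, IntegrableOn (fun t => f t * Real.exp (-V t)) (Set.Iic x) :=
    fun x => hfint.integrableOn
  have hgeq : ∀ x : ℝ, (∫ t in Set.Iic x, -(f t * Real.exp (-V t))) = g x := by
    intro x
    have := integral_Iic_of_hasDerivAt_of_tendsto'
      (f := g) (f' := fun t => -(f t * Real.exp (-V t))) (a := x) (m := 0)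
      (fun t _ => hgd t) ((hint_Iic x).neg) hdecay
    simpa using this
  -- g is nonnegative
  have hgnonneg : ∀ x : ℝ, 0 ≤ g x := by
    intro x
    rw [← hgeq x, integral_neg]
    rw [neg_nonneg]
    rcases le_or_gt (f x) 0 with hfx | hfx
    · apply setIntegral_nonpos measurableSet_Iic
      intro t ht
      have : f t ≤ 0 := le_trans (hf_mono ht) hfx
      exact mul_nonpos_of_nonpos_of_nonneg this (Real.exp_pos _).le
    · -- ∫ Iic = total - ∫ Ioi = -∫ Ioi ≤ 0
      have hsplit : (∫ t in Set.Iic x, f t * Real.exp (-V t))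
          + (∫ t in Set.Ioi x, f t * Real.exp (-V t)) = 0 := by
        rw [intervalIntegral.integral_Iic_add_Ioi (hint_Iic x) hfint.integrableOn, hfzero]
      have hIoi : 0 ≤ ∫ t in Set.Ioi x, f t * Real.exp (-V t) := by
        apply setIntegral_nonneg measurableSet_Ioi
        intro t ht
        have : 0 ≤ f t := le_trans hfx.le (hf_mono ht.le)
        positivity
      linarith
  -- integrability of g on ℝ
  have hφ'm : Measurable φ' := by
    have : φ' = deriv φ := funext fun x => ((hφd x).deriv).symm
    rw [this]; exact measurable_deriv φ
  have hVc : Continuous V := by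
    rw [continuous_iff_continuousAt]; exact fun x => (hV x).continuousAt
  have hgm : Measurable g := hφ'm.mul (hVc.neg.rexp.measurable)
  have hgmeas : AEStronglyMeasurable g volume := hgm.aestronglyMeasurable
  have hgint : Integrable g := by
    refine hφint.mono' hgmeas (Filter.Eventually.of_forall fun x => ?_)
    rw [Real.norm_eq_abs, hg]
    rw [abs_mul, abs_of_nonneg (Real.exp_pos (-V x)).le]
  -- the product function
  have hprod : Integrable (fun p : ℝ × ℝ => g p.1 * g p.2)
      (volume : Measure (ℝ × ℝ)) := by
    have := hgint.mul_prod hgint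
    simpa [Measure.volume_eq_prod] using this
  have hkey : ∀ p : ℝ × ℝ,
      φ' p.1 * φ' p.2 * Real.exp (-(V p.1 + V p.2)) = g p.1 * g p.2 := by
    intro p; rw [hg]; simp only []
    rw [neg_add, Real.exp_add]; ring
  have hαint : Integrable (fun p : ℝ × ℝ => α p * (g p.1 * g p.2)) := by
    refine hprod.mono' ?_ (Filter.Eventually.of_forall fun p => ?_)
    · exact (hαm.mul ((hgm.comp measurable_fst).mul
          (hgm.comp measurable_snd))).aestronglyMeasurable
    · have h1 : |α p| ≤ 1 := abs_le.2 (hαb p)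
      have h2 : 0 ≤ g p.1 * g p.2 := mul_nonneg (hgnonneg _) (hgnonneg _)
      rw [Real.norm_eq_abs, abs_mul, abs_of_nonneg h2]
      calc |α p| * (g p.1 * g p.2) ≤ 1 * (g p.1 * g p.2) :=
            mul_le_mul_of_nonneg_right h1 h2
        _ = g p.1 * g p.2 := one_mul _
      -- norm vs the bound
  have hkey2 : ∀ p : ℝ × ℝ,
      α p * (φ' p.1 * φ' p.2) * Real.exp (-(V p.1 + V p.2)) = α p * (g p.1 * g p.2) := by
    intro p; rw [hg]; simp only []
    rw [neg_add, Real.exp_add]; ring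
  simp only [hkey, hkey2]
  rw [← integral_neg]
  refine integral_mono hprod.neg hαint fun p => ?_
  have h2 : 0 ≤ g p.1 * g p.2 := mul_nonneg (hgnonneg _) (hgnonneg _)
  have := mul_le_mul_of_nonneg_right (hαb p).1 h2
  simpa using this
end

section
/- Symmetric coupling is optimal for symmetric observables (Corollary on symmetric coupling): Let V : ℝ → ℝ be differentiable with ∫_ℝ e^{−V(x)} dx < ∞ and V(−x) = V(x) for all x; let f : ℝ → ℝ be continuous with f(−x) = f(x) for all x, monotonically nonincreasing on (−∞, 0], with x ↦ f(x)e^{−V(x)} Lebesgue-integrable on ℝ and ∫_ℝ f(x)e^{−V(x)} dx = 0; and let φ : ℝ → ℝ be twice differentiable with φ''(x) − V′(x)φ′(x) = −f(x) for all x ∈ ℝ and φ′(x)e^{−V(x)} → 0 as x → −∞. Assume ∫_ℝ |φ′(x)| e^{−V(x)} dx < ∞. Define α*(x,y) := 1 if x·y ≤ 0 and α*(x,y) := −1 if x·y > 0. Then for every measurable α : ℝ × ℝ → ℝ with −1 ≤ α(x,y) ≤ 1 for all (x,y), one has ∫_{ℝ²} α*(x,y) φ′(x)φ′(y) e^{−(V(x)+V(y))}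 dx dy ≤ ∫_{ℝ²} α(x,y) φ′(x)φ′(y) e^{−(V(x)+V(y))} dx dy. -/
open MeasureTheory Real Filter

/-- Symmetric coupling is optimal for symmetric observables: with `V` even, `f` even and
nonincreasing on `(-∞, 0]`, and `φ` the solution of the 1d Poisson equation
`φ'' - V'φ' = -f`, the coupling `α*(x,y) = 1` if `x·y ≤ 0` and `-1` otherwise minimises
`δσ²(α) = ∫ α(x,y) φ'(x) φ'(y) e^{-(V(x)+V(y))} dx dy` over all measurable `α` with
`-1 ≤ α ≤ 1`. -/
theorem symmetric_coupling_optimal_even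
    (V V' f φ φ' φ'' : ℝ → ℝ)
    (hV : ∀ x, HasDerivAt V (V' x) x)
    (hVint : Integrable (fun x => Real.exp (-V x)))
    (hVsymm : ∀ x, V (-x) = V x)
    (hf_cont : Continuous f)
    (hfsymm : ∀ x, f (-x) = f x)
    (hf_anti : AntitoneOn f (Set.Iic 0))
    (hfint : Integrable (fun x => f x * Real.exp (-V x)))
    (hfzero : (∫ x : ℝ, f x * Real.exp (-V x)) = 0)
    (hφd : ∀ x, HasDerivAt φ (φ' x) x)
    (hφd' : ∀ x, HasDerivAt φ' (φ'' x) x)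
    (hPoisson : ∀ x, φ'' x - V' x * φ' x = -f x)
    (hdecay : Tendsto (fun x => φ' x * Real.exp (-V x)) atBot (nhds 0))
    (hφint : Integrable (fun x => |φ' x| * Real.exp (-V x)))
    (αStar : ℝ × ℝ → ℝ)
    (hαStar : ∀ p : ℝ × ℝ, αStar p = if p.1 * p.2 ≤ 0 then 1 else -1) :
    ∀ α : ℝ × ℝ → ℝ, Measurable α → (∀ p : ℝ × ℝ, -1 ≤ α p ∧ α p ≤ 1) →
      (∫ p : ℝ × ℝ, αStar p * (φ' p.1 * φ' p.2) * Real.exp (-(V p.1 + V p.2)))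
        ≤ ∫ p : ℝ × ℝ, α p * (φ' p.1 * φ' p.2) * Real.exp (-(V p.1 + V p.2)) := by
  intro α hαmeas hαbd
  -- notation
  set h : ℝ → ℝ := fun t => f t * Real.exp (-V t) with hh
  set g : ℝ → ℝ := fun t => φ' t * Real.exp (-V t) with hg
  set F : ℝ → ℝ := fun x => ∫ t in Set.Iic x, h t with hF
  -- h is even
  have heven : ∀ t, h (-t) = h t := by
    intro t; simp only [hh, hfsymm, hVsymm]
  -- g = -F
  have hgderiv : ∀ x, HasDerivAt g (-(h x)) x := by
    intro x
    have := (hφd' x).mul ((hV x).neg.exp)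
    refine this.congr_deriv ?_
    simp only [hh]
    linear_combination (Real.exp (-V x)) * hPoisson x
  have hgF : ∀ x, g x = -(F x) := by
    intro x
    have := integral_Iic_of_hasDerivAt_of_tendsto' (a := x)
      (f := g) (f' := fun t => -(h t)) (m := 0)
      (fun t _ => hgderiv t) (hfint.neg.integrableOn) hdecay
    have h2 : (∫ t in Set.Iic x, -(h t)) = -(F x) := by
      simp [hF, integral_neg]
    rw [h2] at this
    linarith [this]
  -- F 0 = 0
  have hsplit : ∀ x : ℝ, F x + (∫ t in Set.Ioi x, h t) = 0 := by
    intro x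
    rw [hF]
    rw [intervalIntegral.integral_Iic_add_Ioi hfint.integrableOn hfint.integrableOn]
    exact hfzero
  have hIoi : ∀ x : ℝ, (∫ t in Set.Ioi x, h t) = F (-x) := by
    intro x
    have := integral_comp_neg_Iic (-x) h
    simp only [neg_neg] at this
    rw [hF]
    rw [← this]
    simp [heven]
  have hFneg : ∀ x : ℝ, F (-x) = -(F x) := by
    intro x
    have := hsplit x
    rw [hIoi x] at this
    linarith
  have hF0 : F 0 = 0 := by
    have := hFneg 0
    simp at this
    linarith
  -- F x ≥ 0 for x ≤ 0
  have hFnonneg : ∀ x : ℝ, x ≤ 0 → 0 ≤ F x := by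
    intro x hx
    by_cases hfx : 0 ≤ f x
    · apply setIntegral_nonneg measurableSet_Iic
      intro t ht
      have hft : f x ≤ f t := hf_anti (ht.trans hx) hx ht
      have : 0 ≤ f t := hfx.trans hft
      exact mul_nonneg this (Real.exp_nonneg _)
    · push_neg at hfx
      have hsplit2 : F x + (∫ t in Set.Ioc x 0, h t) = F 0 := by
        rw [hF]
        rw [← setIntegral_union (Set.Iic_disjoint_Ioc le_rfl) measurableSet_Ioc
          hfint.integrableOn hfint.integrableOn]
        rw [Set.Iic_union_Ioc_eq_Iic hx]
      have hIoc : (∫ t in Set.Ioc x 0, h t) ≤ 0 := by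
        apply setIntegral_nonpos measurableSet_Ioc
        intro t ht
        have hft : f t ≤ f x := hf_anti hx ht.2 ht.1.le
        have : f t ≤ 0 := hft.trans hfx.le
        exact mul_nonpos_of_nonpos_of_nonneg this (Real.exp_nonneg _)
      linarith [hsplit2, hF0]
  -- sign of g
  have hgsign_neg : ∀ x : ℝ, x ≤ 0 → g x ≤ 0 := by
    intro x hx
    rw [hgF x]
    linarith [hFnonneg x hx]
  have hgsign_pos : ∀ x : ℝ, 0 ≤ x → 0 ≤ g x := by
    intro x hx
    rw [hgF x]
    have : F x = -(F (-x)) := by rw [hFneg x]; ring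
    rw [this]
    simp only [neg_neg]
    exact hFnonneg (-x) (by linarith)
  -- pointwise analysis of the integrand
  have hrw : ∀ (β : ℝ × ℝ → ℝ) (p : ℝ × ℝ),
      β p * (φ' p.1 * φ' p.2) * Real.exp (-(V p.1 + V p.2)) = β p * (g p.1 * g p.2) := by
    intro β p
    simp only [hg]
    rw [show -(V p.1 + V p.2) = -V p.1 + -V p.2 by ring, Real.exp_add]
    ring
  have hstar_eq : ∀ p : ℝ × ℝ, αStar p * (g p.1 * g p.2) = -|g p.1 * g p.2| := by
    intro p
    rcases le_or_gt (p.1 * p.2) 0 with hp | hp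
    · rw [hαStar p, if_pos hp, one_mul]
      have hprod : g p.1 * g p.2 ≤ 0 := by
        rcases mul_nonpos_iff.mp hp with ⟨h1, h2⟩ | ⟨h1, h2⟩
        · exact mul_nonpos_of_nonneg_of_nonpos (hgsign_pos _ h1) (hgsign_neg _ h2)
        · exact mul_nonpos_of_nonpos_of_nonneg (hgsign_neg _ h1) (hgsign_pos _ h2)
      rw [abs_of_nonpos hprod, neg_neg]
    · rw [hαStar p, if_neg (not_le.mpr hp)]
      have hprod : 0 ≤ g p.1 * g p.2 := by
        rcases mul_pos_iff.mp hp with ⟨h1, h2⟩ | ⟨h1, h2⟩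
        · exact mul_nonneg (hgsign_pos _ h1.le) (hgsign_pos _ h2.le)
        · nlinarith [hgsign_neg _ h1.le, hgsign_neg _ h2.le]
      rw [abs_of_nonneg hprod]; ring
  have hpt : ∀ p : ℝ × ℝ, αStar p * (g p.1 * g p.2) ≤ α p * (g p.1 * g p.2) := by
    intro p
    rw [hstar_eq p]
    have h1 : |α p * (g p.1 * g p.2)| ≤ |g p.1 * g p.2| := by
      rw [abs_mul]
      have : |α p| ≤ 1 := abs_le.mpr ⟨(hαbd p).1, (hαbd p).2⟩
      nlinarith [abs_nonneg (g p.1 * g p.2)]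
    linarith [neg_abs_le (α p * (g p.1 * g p.2)), h1]
  -- measurability
  have hφ'cont : Continuous φ' := by
    apply continuous_iff_continuousAt.mpr
    intro x; exact (hφd' x).continuousAt
  have hVcont : Continuous V := by
    apply continuous_iff_continuousAt.mpr
    intro x; exact (hV x).continuousAt
  have hgcont : Continuous g := by
    exact hφ'cont.mul (hVcont.neg.rexp)
  have hGmeas : Measurable fun p : ℝ × ℝ => g p.1 * g p.2 :=
    ((hgcont.measurable.comp measurable_fst).mul (hgcont.measurable.comp measurable_snd))
  have hαStarmeas : Measurable αStar := by
    have : αStar = fun p : ℝ × ℝ => if p.1 * p.2 ≤ 0 then (1 : ℝ) else -1 := funext hαStar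
    rw [this]
    exact Measurable.ite (measurableSet_le (measurable_fst.mul measurable_snd) measurable_const)
      measurable_const measurable_const
  -- domination
  have hM : Integrable (fun p : ℝ × ℝ => (|φ' p.1| * Real.exp (-V p.1)) *
      (|φ' p.2| * Real.exp (-V p.2))) := by
    have := hφint.mul_prod hφint
    exact this
  have hbound : ∀ (β : ℝ × ℝ → ℝ), (∀ p, |β p| ≤ 1) →
      ∀ p : ℝ × ℝ, ‖β p * (g p.1 * g p.2)‖ ≤ (|φ' p.1| * Real.exp (-V p.1)) *
        (|φ' p.2| * Real.exp (-V p.2)) := by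
    intro β hβ p
    rw [Real.norm_eq_abs, abs_mul, abs_mul]
    have h1 : |g p.1| = |φ' p.1| * Real.exp (-V p.1) := by
      simp only [hg, abs_mul, abs_of_nonneg (Real.exp_nonneg _)]
    have h2 : |g p.2| = |φ' p.2| * Real.exp (-V p.2) := by
      simp only [hg, abs_mul, abs_of_nonneg (Real.exp_nonneg _)]
    rw [h1, h2]
    have hM12 : 0 ≤ (|φ' p.1| * Real.exp (-V p.1)) * (|φ' p.2| * Real.exp (-V p.2)) :=
      mul_nonneg (mul_nonneg (abs_nonneg _) (Real.exp_nonneg _))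
        (mul_nonneg (abs_nonneg _) (Real.exp_nonneg _))
    exact mul_le_of_le_one_left hM12 (hβ p)
  have hint1 : Integrable (fun p : ℝ × ℝ => αStar p * (g p.1 * g p.2)) := by
    apply hM.mono' ((hαStarmeas.mul hGmeas).aestronglyMeasurable)
    filter_upwards with p
    apply hbound αStar _ p
    intro q
    rw [hαStar q]
    split <;> simp
  have hint2 : Integrable (fun p : ℝ × ℝ => α p * (g p.1 * g p.2)) := by
    apply hM.mono' ((hαmeas.mul hGmeas).aestronglyMeasurable)
    filter_upwards with p
    apply hbound α _ p
    intro q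
    exact abs_le.mpr ⟨(hαbd q).1, (hαbd q).2⟩
  calc (∫ p : ℝ × ℝ, αStar p * (φ' p.1 * φ' p.2) * Real.exp (-(V p.1 + V p.2)))
      = ∫ p : ℝ × ℝ, αStar p * (g p.1 * g p.2) := by
        congr 1; funext p; exact hrw αStar p
    _ ≤ ∫ p : ℝ × ℝ, α p * (g p.1 * g p.2) := integral_mono hint1 hint2 hpt
    _ = ∫ p : ℝ × ℝ, α p * (φ' p.1 * φ' p.2) * Real.exp (-(V p.1 + V p.2)) := by
        congr 1; funext p; exact (hrw α p).symm
end

section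
/- Optimal zigzag coupling for monotone observables (Corollary): Let V : ℝ → ℝ be differentiable, let γ : ℝ → ℝ be nonnegative, and set λ(x,θ) := max(0, θ·V′(x)) + γ(x) for x ∈ ℝ and θ ∈ {−1, +1}. Let ψ : ℝ → ℝ be measurable with ψ(x) ≥ 0 for all x, and assume that for each (θₓ,θᵧ) ∈ {−1,1}² the function (x,y) ↦ min(λ(x,θₓ), λ(y,θᵧ)) |ψ(x)ψ(y)| e^{−(V(x)+V(y))} is integrable on ℝ². With J(α) := (1/4) ∫_{ℝ²} [α(x,y,1,1) + α(x,y,−1,−1) − α(x,y,1,−1) − α(x,y,−1,1)] ψ(x)ψ(y) e^{−(V(x)+V(y))} dx dy, define α*(x,y,θₓ,θᵧ) := min(λ(x,θₓ), λ(y,θᵧ)) if θₓ·θᵧ ≤ 0 and α*(x,y,θₓ,θᵧ) := 0 otherwise. Then for every measurable α : ℝ × ℝ × {−1,1} × {−1,1} → ℝ with 0 ≤ α(x,y,θₓ,θᵧ) ≤ min(λ(x,θₓ), λ(y,θᵧ)) for all arguments, one has J(α*) ≤ J(α). -/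
open MeasureTheory Real

/-- Optimal zigzag coupling for monotone observables (`ψ ≥ 0`): the coupling `α*` that
encourages simultaneous flips exactly when the particles move in opposite directions
(`θₓθᵧ ≤ 0`) minimises `J(α)` over all admissible couplings `α`. -/
theorem optimal_zigzag_coupling_monotone
    (V V' γ ψ : ℝ → ℝ)
    (hV : ∀ x, HasDerivAt V (V' x) x)
    (hγ : ∀ x, 0 ≤ γ x)
    (hψ : Measurable ψ)
    (hψ_nonneg : ∀ x, 0 ≤ ψ x)
    (lam : ℝ → ℝ → ℝ)
    (hlam : ∀ x θ, lam x θ = max 0 (θ * V' x) + γ x)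
    (hint : ∀ θx ∈ ({-1, 1} : Set ℝ), ∀ θy ∈ ({-1, 1} : Set ℝ),
      Integrable (fun p : ℝ × ℝ =>
        min (lam p.1 θx) (lam p.2 θy) * |ψ p.1 * ψ p.2| * Real.exp (-(V p.1 + V p.2))))
    (J : (ℝ → ℝ → ℝ → ℝ → ℝ) → ℝ)
    (hJ : ∀ α, J α = (1 / 4) * ∫ p : ℝ × ℝ,
        (α p.1 p.2 1 1 + α p.1 p.2 (-1) (-1) - α p.1 p.2 1 (-1) - α p.1 p.2 (-1) 1)
          * (ψ p.1 * ψ p.2) * Real.exp (-(V p.1 + V p.2)))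
    (αStar : ℝ → ℝ → ℝ → ℝ → ℝ)
    (hαStar : ∀ x y θx θy, αStar x y θx θy =
      if θx * θy ≤ 0 then min (lam x θx) (lam y θy) else 0) :
    ∀ α : ℝ → ℝ → ℝ → ℝ → ℝ,
      (∀ θx ∈ ({-1, 1} : Set ℝ), ∀ θy ∈ ({-1, 1} : Set ℝ),
        Measurable (fun p : ℝ × ℝ => α p.1 p.2 θx θy)) →
      (∀ x y : ℝ, ∀ θx ∈ ({-1, 1} : Set ℝ), ∀ θy ∈ ({-1, 1} : Set ℝ),
        0 ≤ α x y θx θy ∧ α x y θx θy ≤ min (lam x θx) (lam y θy)) →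
      J αStar ≤ J α := by
  intro α hmeas hbd
  have hm1 : (-1 : ℝ) ∈ ({-1, 1} : Set ℝ) := by norm_num
  have hp1 : (1 : ℝ) ∈ ({-1, 1} : Set ℝ) := by norm_num
  have hψψ : ∀ p : ℝ × ℝ, 0 ≤ ψ p.1 * ψ p.2 :=
    fun p => mul_nonneg (hψ_nonneg _) (hψ_nonneg _)
  have hlamnn : ∀ x θ, 0 ≤ lam x θ := by
    intro x θ; rw [hlam]; exact add_nonneg (le_max_left _ _) (hγ x)
  have hint' : ∀ θx ∈ ({-1, 1} : Set ℝ), ∀ θy ∈ ({-1, 1} : Set ℝ),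
      Integrable (fun p : ℝ × ℝ =>
        min (lam p.1 θx) (lam p.2 θy) * (ψ p.1 * ψ p.2) * Real.exp (-(V p.1 + V p.2))) := by
    intro θx hθx θy hθy
    refine (hint θx hθx θy hθy).congr (Filter.Eventually.of_forall fun p => ?_)
    simp only [abs_of_nonneg (hψψ p)]
  have hfint : Integrable (fun p : ℝ × ℝ =>
      (αStar p.1 p.2 1 1 + αStar p.1 p.2 (-1) (-1) - αStar p.1 p.2 1 (-1) - αStar p.1 p.2 (-1) 1)
        * (ψ p.1 * ψ p.2) * Real.exp (-(V p.1 + V p.2))) := by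
    refine (((hint' 1 hp1 (-1) hm1).add (hint' (-1) hm1 1 hp1)).neg).congr
      (Filter.Eventually.of_forall fun p => ?_)
    simp only [hαStar]
    norm_num
    ring
  have hVc : Continuous V := (Differentiable.continuous fun x => (hV x).differentiableAt)
  have hterm : ∀ θx ∈ ({-1, 1} : Set ℝ), ∀ θy ∈ ({-1, 1} : Set ℝ),
      Integrable (fun p : ℝ × ℝ =>
        α p.1 p.2 θx θy * (ψ p.1 * ψ p.2) * Real.exp (-(V p.1 + V p.2))) := by
    intro θx hθx θy hθy
    refine (hint θx hθx θy hθy).mono ?_ (Filter.Eventually.of_forall fun p => ?_)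
    · exact (((hmeas θx hθx θy hθy).mul
        ((hψ.comp measurable_fst).mul (hψ.comp measurable_snd))).mul
        (((hVc.measurable.comp measurable_fst).add
          (hVc.measurable.comp measurable_snd)).neg.exp)).aestronglyMeasurable
    · have h0 := (hbd p.1 p.2 θx hθx θy hθy).1
      have h1 := (hbd p.1 p.2 θx hθx θy hθy).2
      rw [Real.norm_eq_abs, Real.norm_eq_abs, abs_of_nonneg, abs_of_nonneg,
        abs_of_nonneg (hψψ p)]
      · gcongr
        exact hψψ p
      · exact mul_nonneg (mul_nonneg (le_min (hlamnn _ _) (hlamnn _ _))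
          (abs_nonneg _)) (Real.exp_pos _).le
      · exact mul_nonneg (mul_nonneg h0 (hψψ p)) (Real.exp_pos _).le
  have hgint : Integrable (fun p : ℝ × ℝ =>
      (α p.1 p.2 1 1 + α p.1 p.2 (-1) (-1) - α p.1 p.2 1 (-1) - α p.1 p.2 (-1) 1)
        * (ψ p.1 * ψ p.2) * Real.exp (-(V p.1 + V p.2))) := by
    refine ((((hterm 1 hp1 1 hp1).add (hterm (-1) hm1 (-1) hm1)).sub
      (hterm 1 hp1 (-1) hm1)).sub (hterm (-1) hm1 1 hp1)).congr
      (Filter.Eventually.of_forall fun p => ?_)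
    simp only [Pi.add_apply, Pi.sub_apply]
    ring
  rw [hJ, hJ]
  refine mul_le_mul_of_nonneg_left (integral_mono hfint hgint fun p => ?_) (by norm_num)
  have h11 := (hbd p.1 p.2 1 hp1 1 hp1).1
  have hmm := (hbd p.1 p.2 (-1) hm1 (-1) hm1).1
  have h1m := (hbd p.1 p.2 1 hp1 (-1) hm1).2
  have hm1' := (hbd p.1 p.2 (-1) hm1 1 hp1).2
  have hA : (αStar p.1 p.2 1 1 + αStar p.1 p.2 (-1) (-1) - αStar p.1 p.2 1 (-1)
      - αStar p.1 p.2 (-1) 1) ≤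
      (α p.1 p.2 1 1 + α p.1 p.2 (-1) (-1) - α p.1 p.2 1 (-1) - α p.1 p.2 (-1) 1) := by
    simp only [hαStar]
    norm_num
    linarith
  have hexp : (0:ℝ) ≤ Real.exp (-(V p.1 + V p.2)) := (Real.exp_pos _).le
  exact mul_le_mul_of_nonneg_right (mul_le_mul_of_nonneg_right hA (hψψ p)) hexp
end

section
/- Optimal zigzag coupling for symmetric observables (Corollary): Let V : ℝ → ℝ be differentiable, let γ : ℝ → ℝ be nonnegative, and set λ(x,θ) := max(0, θ·V′(x)) + γ(x) for x ∈ ℝ and θ ∈ {−1, +1}. Let ψ : ℝ → ℝ be continuous with x·ψ(x) ≥ 0 for all x, and assume that for each (θₓ,θᵧ) ∈ {−1,1}² the function (x,y) ↦ min(λ(x,θₓ), λ(y,θᵧ)) |ψ(x)ψ(y)| e^{−(V(x)+V(y))} is integrable on ℝ². With J(α) := (1/4) ∫_{ℝ²} [α(x,y,1,1) + α(x,y,−1,−1) − α(x,y,1,−1) − α(x,y,−1,1)] ψ(x)ψ(y) e^{−(V(x)+V(y))} dx dy, define α*(x,y,θₓ,θᵧ) := min(λ(x,θₓ), λ(y,θᵧ))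 if x·y·θₓ·θᵧ ≤ 0 and α*(x,y,θₓ,θᵧ) := 0 otherwise. Then for every measurable α : ℝ × ℝ × {−1,1} × {−1,1} → ℝ with 0 ≤ α(x,y,θₓ,θᵧ) ≤ min(λ(x,θₓ), λ(y,θᵧ)) for all arguments, one has J(α*) ≤ J(α). -/
open MeasureTheory Real

/-- Optimal zigzag coupling for symmetric observables (`x·ψ(x) ≥ 0`, `ψ` continuous):
the coupling `α*` that encourages simultaneous flips exactly when `x·y·θₓ·θᵧ ≤ 0`
minimises `J(α)` over all admissible couplings `α`. -/
theorem optimal_zigzag_coupling_symmetric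
    (V V' γ ψ : ℝ → ℝ)
    (hV : ∀ x, HasDerivAt V (V' x) x)
    (hγ : ∀ x, 0 ≤ γ x)
    (hψ_cont : Continuous ψ)
    (hψ_sign : ∀ x, 0 ≤ x * ψ x)
    (lam : ℝ → ℝ → ℝ)
    (hlam : ∀ x θ, lam x θ = max 0 (θ * V' x) + γ x)
    (hint : ∀ θx ∈ ({-1, 1} : Set ℝ), ∀ θy ∈ ({-1, 1} : Set ℝ),
      Integrable (fun p : ℝ × ℝ =>
        min (lam p.1 θx) (lam p.2 θy) * |ψ p.1 * ψ p.2| * Real.exp (-(V p.1 + V p.2))))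
    (J : (ℝ → ℝ → ℝ → ℝ → ℝ) → ℝ)
    (hJ : ∀ α, J α = (1 / 4) * ∫ p : ℝ × ℝ,
        (α p.1 p.2 1 1 + α p.1 p.2 (-1) (-1) - α p.1 p.2 1 (-1) - α p.1 p.2 (-1) 1)
          * (ψ p.1 * ψ p.2) * Real.exp (-(V p.1 + V p.2)))
    (αStar : ℝ → ℝ → ℝ → ℝ → ℝ)
    (hαStar : ∀ x y θx θy, αStar x y θx θy =
      if x * y * θx * θy ≤ 0 then min (lam x θx) (lam y θy) else 0) :
    ∀ α : ℝ → ℝ → ℝ → ℝ → ℝ,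
      (∀ θx ∈ ({-1, 1} : Set ℝ), ∀ θy ∈ ({-1, 1} : Set ℝ),
        Measurable (fun p : ℝ × ℝ => α p.1 p.2 θx θy)) →
      (∀ x y : ℝ, ∀ θx ∈ ({-1, 1} : Set ℝ), ∀ θy ∈ ({-1, 1} : Set ℝ),
        0 ≤ α x y θx θy ∧ α x y θx θy ≤ min (lam x θx) (lam y θy)) →
      J αStar ≤ J α := by
  intro α hαmeas hαbound
  have hm1 : (-1:ℝ) ∈ ({-1,1}:Set ℝ) := by left; rfl
  have hp1 : (1:ℝ) ∈ ({-1,1}:Set ℝ) := by right; rfl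
  -- continuity facts
  have hVc : Continuous V := by
    rw [continuous_iff_continuousAt]; exact fun x => (hV x).continuousAt
  have hec : Continuous (fun p : ℝ × ℝ => Real.exp (-(V p.1 + V p.2))) :=
    Real.continuous_exp.comp ((hVc.comp continuous_fst).add (hVc.comp continuous_snd)).neg
  have hψψ : Continuous (fun p : ℝ × ℝ => ψ p.1 * ψ p.2) :=
    (hψ_cont.comp continuous_fst).mul (hψ_cont.comp continuous_snd)
  have hlam_nonneg : ∀ x θ, 0 ≤ lam x θ := fun x θ => by
    rw [hlam]; exact add_nonneg (le_max_left _ _) (hγ x)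
  -- sign properties of ψ
  have hψpos' : ∀ x : ℝ, 0 < x → 0 ≤ ψ x := by
    intro x hx
    nlinarith [hψ_sign x]
  have hψneg' : ∀ x : ℝ, x < 0 → ψ x ≤ 0 := by
    intro x hx
    nlinarith [hψ_sign x]
  have hψ0 : ψ 0 = 0 := by
    have h1 : 0 ≤ ψ 0 := by
      refine ge_of_tendsto (hψ_cont.continuousWithinAt :
        Filter.Tendsto ψ (nhdsWithin 0 (Set.Ioi 0)) (nhds (ψ 0))) ?_
      filter_upwards [self_mem_nhdsWithin] with x hx
      exact hψpos' x hx
    have h2 : ψ 0 ≤ 0 := by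
      refine le_of_tendsto (hψ_cont.continuousWithinAt :
        Filter.Tendsto ψ (nhdsWithin 0 (Set.Iio 0)) (nhds (ψ 0))) ?_
      filter_upwards [self_mem_nhdsWithin] with x hx
      exact hψneg' x hx
    linarith
  have hψpos : ∀ x : ℝ, 0 ≤ x → 0 ≤ ψ x := by
    intro x hx
    rcases hx.lt_or_eq with h | h
    · exact hψpos' x h
    · rw [← h, hψ0]
  have hψneg : ∀ x : ℝ, x ≤ 0 → ψ x ≤ 0 := by
    intro x hx
    rcases hx.lt_or_eq with h | h
    · exact hψneg' x h
    · rw [h, hψ0]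
  have hprod_nonneg : ∀ x y : ℝ, 0 ≤ x * y → 0 ≤ ψ x * ψ y := by
    intro x y hxy
    rcases le_total 0 x with hx | hx <;> rcases le_total 0 y with hy | hy
    · exact mul_nonneg (hψpos x hx) (hψpos y hy)
    · have h0 : x * y = 0 := le_antisymm (mul_nonpos_iff.mpr (Or.inl ⟨hx, hy⟩)) hxy
      rcases mul_eq_zero.mp h0 with h | h <;> simp [h, hψ0]
    · have h0 : x * y = 0 := le_antisymm (mul_nonpos_iff.mpr (Or.inr ⟨hx, hy⟩)) hxy
      rcases mul_eq_zero.mp h0 with h | h <;> simp [h, hψ0]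
    · exact mul_nonneg_iff.mpr (Or.inr ⟨hψneg x hx, hψneg y hy⟩)
  have hprod_nonpos : ∀ x y : ℝ, x * y ≤ 0 → ψ x * ψ y ≤ 0 := by
    intro x y hxy
    rcases le_total 0 x with hx | hx <;> rcases le_total 0 y with hy | hy
    · have h0 : x * y = 0 := le_antisymm hxy (mul_nonneg hx hy)
      rcases mul_eq_zero.mp h0 with h | h <;> simp [h, hψ0]
    · exact mul_nonpos_iff.mpr (Or.inl ⟨hψpos x hx, hψneg y hy⟩)
    · exact mul_nonpos_iff.mpr (Or.inr ⟨hψneg x hx, hψpos y hy⟩)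
    · have h0 : x * y = 0 := le_antisymm hxy (mul_nonneg_iff.mpr (Or.inr ⟨hx, hy⟩))
      rcases mul_eq_zero.mp h0 with h | h <;> simp [h, hψ0]
  -- pointwise comparison of the integrands
  have hpt : ∀ p : ℝ × ℝ,
      (αStar p.1 p.2 1 1 + αStar p.1 p.2 (-1) (-1) - αStar p.1 p.2 1 (-1) - αStar p.1 p.2 (-1) 1)
          * (ψ p.1 * ψ p.2) * Real.exp (-(V p.1 + V p.2))
      ≤ (α p.1 p.2 1 1 + α p.1 p.2 (-1) (-1) - α p.1 p.2 1 (-1) - α p.1 p.2 (-1) 1)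
          * (ψ p.1 * ψ p.2) * Real.exp (-(V p.1 + V p.2)) := by
    rintro ⟨x, y⟩
    simp only [hαStar]
    obtain ⟨ha11, hb11⟩ := hαbound x y 1 hp1 1 hp1
    obtain ⟨hamm, hbmm⟩ := hαbound x y (-1) hm1 (-1) hm1
    obtain ⟨ha1m, hb1m⟩ := hαbound x y 1 hp1 (-1) hm1
    obtain ⟨ham1, hbm1⟩ := hαbound x y (-1) hm1 1 hp1
    have hmn11 : 0 ≤ min (lam x 1) (lam y 1) := le_min (hlam_nonneg x 1) (hlam_nonneg y 1)
    have hmnmm : 0 ≤ min (lam x (-1)) (lam y (-1)) :=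
      le_min (hlam_nonneg x (-1)) (hlam_nonneg y (-1))
    have hmn1m : 0 ≤ min (lam x 1) (lam y (-1)) := le_min (hlam_nonneg x 1) (hlam_nonneg y (-1))
    have hmnm1 : 0 ≤ min (lam x (-1)) (lam y 1) := le_min (hlam_nonneg x (-1)) (hlam_nonneg y 1)
    have hexp : (0:ℝ) ≤ Real.exp (-(V x + V y)) := (Real.exp_pos _).le
    rcases lt_trichotomy (x * y) 0 with hxy | hxy | hxy
    · -- x*y < 0 : ψ x * ψ y ≤ 0
      have hs : ψ x * ψ y ≤ 0 := hprod_nonpos x y hxy.le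
      rw [if_pos (by nlinarith), if_pos (by nlinarith), if_neg (by push_neg; nlinarith),
        if_neg (by push_neg; nlinarith)]
      have hsum : (α x y 1 1 + α x y (-1) (-1) - α x y 1 (-1) - α x y (-1) 1)
          ≤ min (lam x 1) (lam y 1) + min (lam x (-1)) (lam y (-1)) - 0 - 0 := by linarith
      have h1 := mul_le_mul_of_nonpos_right hsum hs
      exact mul_le_mul_of_nonneg_right h1 hexp
    · -- x*y = 0 : both sides vanish
      rcases mul_eq_zero.mp hxy with h | h <;> simp [h, hψ0]
    · -- 0 < x*y : ψ x * ψ y ≥ 0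
      have hs : 0 ≤ ψ x * ψ y := hprod_nonneg x y hxy.le
      rw [if_neg (by push_neg; nlinarith), if_neg (by push_neg; nlinarith),
        if_pos (by nlinarith), if_pos (by nlinarith)]
      have hsum : (0 + 0 - min (lam x 1) (lam y (-1)) - min (lam x (-1)) (lam y 1))
          ≤ α x y 1 1 + α x y (-1) (-1) - α x y 1 (-1) - α x y (-1) 1 := by linarith
      have h1 := mul_le_mul_of_nonneg_right hsum hs
      exact mul_le_mul_of_nonneg_right h1 hexp
  -- integrability of the signed integrands
  have hg : ∀ θx ∈ ({-1,1}:Set ℝ), ∀ θy ∈ ({-1,1}:Set ℝ),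
      Integrable (fun p : ℝ × ℝ =>
        min (lam p.1 θx) (lam p.2 θy) * (ψ p.1 * ψ p.2) * Real.exp (-(V p.1 + V p.2))) := by
    intro θx hθx θy hθy
    have hh := hint θx hθx θy hθy
    have hc : Measurable (fun p : ℝ × ℝ => if 0 ≤ ψ p.1 * ψ p.2 then (1:ℝ) else -1) :=
      Measurable.ite (measurableSet_le measurable_const hψψ.measurable)
        measurable_const measurable_const
    have heq : (fun p : ℝ × ℝ =>
        min (lam p.1 θx) (lam p.2 θy) * (ψ p.1 * ψ p.2) * Real.exp (-(V p.1 + V p.2)))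
        = fun p : ℝ × ℝ =>
          (min (lam p.1 θx) (lam p.2 θy) * |ψ p.1 * ψ p.2| * Real.exp (-(V p.1 + V p.2)))
          * (if 0 ≤ ψ p.1 * ψ p.2 then (1:ℝ) else -1) := by
      funext p
      split_ifs with h
      · rw [abs_of_nonneg h]; ring
      · rw [abs_of_neg (lt_of_not_ge h)]; ring
    rw [heq]
    refine Integrable.mono' hh.abs
      (hh.aestronglyMeasurable.mul hc.aestronglyMeasurable) (Filter.Eventually.of_forall ?_)
    intro p
    have habs1 : |(if 0 ≤ ψ p.1 * ψ p.2 then (1:ℝ) else -1)| = 1 := by split_ifs <;> simp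
    rw [Real.norm_eq_abs, abs_mul, habs1, mul_one]
  have hS11 : MeasurableSet {p : ℝ × ℝ | p.1 * p.2 * 1 * 1 ≤ 0} :=
    measurableSet_le (((measurable_fst.mul measurable_snd).mul_const _).mul_const _)
      measurable_const
  have hSmm : MeasurableSet {p : ℝ × ℝ | p.1 * p.2 * (-1) * (-1) ≤ 0} :=
    measurableSet_le (((measurable_fst.mul measurable_snd).mul_const _).mul_const _)
      measurable_const
  have hS1m : MeasurableSet {p : ℝ × ℝ | p.1 * p.2 * 1 * (-1) ≤ 0} :=
    measurableSet_le (((measurable_fst.mul measurable_snd).mul_const _).mul_const _)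
      measurable_const
  have hSm1 : MeasurableSet {p : ℝ × ℝ | p.1 * p.2 * (-1) * 1 ≤ 0} :=
    measurableSet_le (((measurable_fst.mul measurable_snd).mul_const _).mul_const _)
      measurable_const
  have hstar_eq : (fun p : ℝ × ℝ =>
      (αStar p.1 p.2 1 1 + αStar p.1 p.2 (-1) (-1) - αStar p.1 p.2 1 (-1) - αStar p.1 p.2 (-1) 1)
        * (ψ p.1 * ψ p.2) * Real.exp (-(V p.1 + V p.2)))
      = fun p : ℝ × ℝ =>
        ({p : ℝ × ℝ | p.1 * p.2 * 1 * 1 ≤ 0}.indicator (fun p : ℝ × ℝ =>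
          min (lam p.1 1) (lam p.2 1) * (ψ p.1 * ψ p.2) * Real.exp (-(V p.1 + V p.2))) p)
        + ({p : ℝ × ℝ | p.1 * p.2 * (-1) * (-1) ≤ 0}.indicator (fun p : ℝ × ℝ =>
          min (lam p.1 (-1)) (lam p.2 (-1)) * (ψ p.1 * ψ p.2) * Real.exp (-(V p.1 + V p.2))) p)
        - ({p : ℝ × ℝ | p.1 * p.2 * 1 * (-1) ≤ 0}.indicator (fun p : ℝ × ℝ =>
          min (lam p.1 1) (lam p.2 (-1)) * (ψ p.1 * ψ p.2) * Real.exp (-(V p.1 + V p.2))) p)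
        - ({p : ℝ × ℝ | p.1 * p.2 * (-1) * 1 ≤ 0}.indicator (fun p : ℝ × ℝ =>
          min (lam p.1 (-1)) (lam p.2 1) * (ψ p.1 * ψ p.2) * Real.exp (-(V p.1 + V p.2))) p) := by
    funext p
    simp only [hαStar, Set.indicator, Set.mem_setOf_eq]
    split_ifs <;> ring
  have hIntStar : Integrable (fun p : ℝ × ℝ =>
      (αStar p.1 p.2 1 1 + αStar p.1 p.2 (-1) (-1) - αStar p.1 p.2 1 (-1) - αStar p.1 p.2 (-1) 1)
        * (ψ p.1 * ψ p.2) * Real.exp (-(V p.1 + V p.2))) := by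
    rw [hstar_eq]
    exact ((((hg 1 hp1 1 hp1).indicator hS11).add
      (((hg (-1) hm1 (-1) hm1)).indicator hSmm)).sub
      (((hg 1 hp1 (-1) hm1)).indicator hS1m)).sub (((hg (-1) hm1 1 hp1)).indicator hSm1)
  have hIntα : Integrable (fun p : ℝ × ℝ =>
      (α p.1 p.2 1 1 + α p.1 p.2 (-1) (-1) - α p.1 p.2 1 (-1) - α p.1 p.2 (-1) 1)
        * (ψ p.1 * ψ p.2) * Real.exp (-(V p.1 + V p.2))) := by
    have haesm : AEStronglyMeasurable (fun p : ℝ × ℝ =>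
        (α p.1 p.2 1 1 + α p.1 p.2 (-1) (-1) - α p.1 p.2 1 (-1) - α p.1 p.2 (-1) 1)
          * (ψ p.1 * ψ p.2) * Real.exp (-(V p.1 + V p.2))) volume :=
      (((((((hαmeas 1 hp1 1 hp1).add (hαmeas (-1) hm1 (-1) hm1)).sub
        (hαmeas 1 hp1 (-1) hm1)).sub (hαmeas (-1) hm1 1 hp1)).mul
        hψψ.measurable).mul hec.measurable)).aestronglyMeasurable
    refine Integrable.mono'
      ((((hint 1 hp1 1 hp1).add (hint (-1) hm1 (-1) hm1)).add (hint 1 hp1 (-1) hm1)).add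
        (hint (-1) hm1 1 hp1))
      haesm (Filter.Eventually.of_forall ?_)
    rintro ⟨x, y⟩
    obtain ⟨ha11, hb11⟩ := hαbound x y 1 hp1 1 hp1
    obtain ⟨hamm, hbmm⟩ := hαbound x y (-1) hm1 (-1) hm1
    obtain ⟨ha1m, hb1m⟩ := hαbound x y 1 hp1 (-1) hm1
    obtain ⟨ham1, hbm1⟩ := hαbound x y (-1) hm1 1 hp1
    have hmn1m : 0 ≤ min (lam x 1) (lam y (-1)) := le_min (hlam_nonneg x 1) (hlam_nonneg y (-1))
    have hmnm1 : 0 ≤ min (lam x (-1)) (lam y 1) := le_min (hlam_nonneg x (-1)) (hlam_nonneg y 1)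
    have hmn11 : 0 ≤ min (lam x 1) (lam y 1) := le_min (hlam_nonneg x 1) (hlam_nonneg y 1)
    have hmnmm : 0 ≤ min (lam x (-1)) (lam y (-1)) :=
      le_min (hlam_nonneg x (-1)) (hlam_nonneg y (-1))
    have habs : |α x y 1 1 + α x y (-1) (-1) - α x y 1 (-1) - α x y (-1) 1|
        ≤ min (lam x 1) (lam y 1) + min (lam x (-1)) (lam y (-1))
          + min (lam x 1) (lam y (-1)) + min (lam x (-1)) (lam y 1) :=
      abs_le.mpr ⟨by linarith, by linarith⟩
    calc |(α x y 1 1 + α x y (-1) (-1) - α x y 1 (-1) - α x y (-1) 1)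
          * (ψ x * ψ y) * Real.exp (-(V x + V y))|
        = |α x y 1 1 + α x y (-1) (-1) - α x y 1 (-1) - α x y (-1) 1|
          * |ψ x * ψ y| * Real.exp (-(V x + V y)) := by
          rw [abs_mul, abs_mul, Real.abs_exp]
      _ ≤ (min (lam x 1) (lam y 1) + min (lam x (-1)) (lam y (-1))
          + min (lam x 1) (lam y (-1)) + min (lam x (-1)) (lam y 1))
          * |ψ x * ψ y| * Real.exp (-(V x + V y)) :=
          mul_le_mul_of_nonneg_right
            (mul_le_mul_of_nonneg_right habs (abs_nonneg _)) (Real.exp_pos _).le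
      _ = min (lam x 1) (lam y 1) * |ψ x * ψ y| * Real.exp (-(V x + V y))
          + min (lam x (-1)) (lam y (-1)) * |ψ x * ψ y| * Real.exp (-(V x + V y))
          + min (lam x 1) (lam y (-1)) * |ψ x * ψ y| * Real.exp (-(V x + V y))
          + min (lam x (-1)) (lam y 1) * |ψ x * ψ y| * Real.exp (-(V x + V y)) := by ring
  rw [hJ αStar, hJ α]
  exact mul_le_mul_of_nonneg_left (integral_mono hIntStar hIntα hpt) (by norm_num)
end

section
/- Sign of the derivative of the solution of the one-dimensional Poisson equation for monotone data (Lemma, part 1): Let V : ℝ → ℝ be differentiable with ∫_ℝ e^{−V(x)} dx < ∞, let f : ℝ → ℝ be continuous and monotonically nondecreasing with x ↦ f(x)e^{−V(x)} Lebesgue-integrable on ℝ and ∫_ℝ f(x)e^{−V(x)} dx = 0, and let φ : ℝ → ℝ be twice differentiable with φ''(x) − V′(x)φ′(x) = −f(x) for all x ∈ ℝ and φ′(x)e^{−V(x)} → 0 as x → −∞. Then φ′(x) ≥ 0 for all x ∈ ℝ. -/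
open MeasureTheory Real Filter

/-- Sign of the derivative of the solution of the one-dimensional Poisson equation
`φ'' - V'φ' = -f` for monotone centred data `f`: `φ' ≥ 0` everywhere. -/
theorem poisson_derivative_nonneg_of_monotone
    (V V' f φ φ' φ'' : ℝ → ℝ)
    (hV : ∀ x, HasDerivAt V (V' x) x)
    (hVint : Integrable (fun x => Real.exp (-V x)))
    (hf_cont : Continuous f) (hf_mono : Monotone f)
    (hfint : Integrable (fun x => f x * Real.exp (-V x)))
    (hfzero : (∫ x : ℝ, f x * Real.exp (-V x)) = 0)
    (hφd : ∀ x, HasDerivAt φ (φ' x) x)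
    (hφd' : ∀ x, HasDerivAt φ' (φ'' x) x)
    (hPoisson : ∀ x, φ'' x - V' x * φ' x = -f x)
    (hdecay : Tendsto (fun x => φ' x * Real.exp (-V x)) atBot (nhds 0)) :
    ∀ x : ℝ, 0 ≤ φ' x := by
  intro x
  set g : ℝ → ℝ := fun y => φ' y * Real.exp (-V y) with hg_def
  have hVc : Continuous V := by
    have : Differentiable ℝ V := fun y => (hV y).differentiableAt
    exact this.continuous
  have hcont : Continuous (fun y => -f y * Real.exp (-V y)) :=
    (hf_cont.neg.mul (hVc.neg.rexp))
  have hg : ∀ y, HasDerivAt g (-f y * Real.exp (-V y)) y := by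
    intro y
    have hexp : HasDerivAt (fun z => Real.exp (-V z)) (Real.exp (-V y) * (-V' y)) y :=
      ((hV y).neg).exp
    have := (hφd' y).mul hexp
    refine this.congr_deriv ?_
    linear_combination (Real.exp (-V y)) * hPoisson y
  -- FTC on [a, x]
  have hFTC : ∀ a, ∫ t in a..x, -f t * Real.exp (-V t) = g x - g a := by
    intro a
    exact intervalIntegral.integral_eq_sub_of_hasDerivAt (fun t _ => hg t)
      (hcont.intervalIntegrable a x)
  have hInt : Integrable (fun t => -f t * Real.exp (-V t)) := by
    have heq : (fun t => -f t * Real.exp (-V t)) = fun t => -(f t * Real.exp (-V t)) := by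
      funext t; ring
    rw [heq]; exact hfint.neg
  have hlim : Tendsto (fun a => ∫ t in a..x, -f t * Real.exp (-V t)) atBot
      (nhds (∫ t in Set.Iic x, -f t * Real.exp (-V t))) :=
    intervalIntegral_tendsto_integral_Iic x (hInt.integrableOn) tendsto_id
  have hlim2 : Tendsto (fun a => g x - g a) atBot (nhds (g x - 0)) :=
    tendsto_const_nhds.sub hdecay
  have hkey : g x = ∫ t in Set.Iic x, -f t * Real.exp (-V t) := by
    have := tendsto_nhds_unique (hlim.congr fun a => hFTC a) hlim2
    linarith [this]
  have hIic_le : (∫ t in Set.Iic x, f t * Real.exp (-V t)) ≤ 0 := by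
    rcases le_or_gt (f x) 0 with hfx | hfx
    · apply setIntegral_nonpos measurableSet_Iic
      intro t ht
      exact mul_nonpos_of_nonpos_of_nonneg ((hf_mono ht).trans hfx) (Real.exp_pos _).le
    · have hsplit : (∫ t in Set.Iic x, f t * Real.exp (-V t))
          + (∫ t in Set.Ioi x, f t * Real.exp (-V t)) = 0 := by
        rw [intervalIntegral.integral_Iic_add_Ioi hfint.integrableOn hfint.integrableOn, hfzero]
      have hIoi : 0 ≤ ∫ t in Set.Ioi x, f t * Real.exp (-V t) := by
        apply setIntegral_nonneg measurableSet_Ioi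
        intro t ht
        exact mul_nonneg ((hfx.le.trans (hf_mono ht.le))) (Real.exp_pos _).le
      linarith
  have hgx : 0 ≤ g x := by
    rw [hkey]
    have : (∫ t in Set.Iic x, -f t * Real.exp (-V t))
        = -∫ t in Set.Iic x, f t * Real.exp (-V t) := by
      simp [neg_mul, integral_neg]
    rw [this]
    linarith
  have hexp_pos : 0 < Real.exp (-V x) := Real.exp_pos _
  by_contra h
  push_neg at h
  have : g x < 0 := mul_neg_of_neg_of_pos h hexp_pos
  linarith
end

section
/- Sign of the derivative of the solution of the one-dimensional Poisson equation for even data (Lemma, part 2): Let V : ℝ → ℝ be differentiable with ∫_ℝ e^{−V(x)} dx < ∞ and V(−x) = V(x) for all x; let f : ℝ → ℝ be continuous with f(−x) = f(x) for all x, monotonically nonincreasing on (−∞, 0], with x ↦ f(x)e^{−V(x)} Lebesgue-integrable on ℝ and ∫_ℝ f(x)e^{−V(x)} dx = 0; and let φ : ℝ → ℝ be twice differentiable with φ''(x) − V′(x)φ′(x) = −f(x) for all x ∈ ℝ and φ′(x)e^{−V(x)} → 0 as x → −∞. Then x·φ′(x) ≥ 0 for all x ∈ ℝ. -/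
open MeasureTheory Real Filter

/-- Sign of the derivative of the solution of the one-dimensional Poisson equation
`φ'' - V'φ' = -f` for even data: if `V` and `f` are even, and `f` is nonincreasing on
`(-∞, 0]`, then `x·φ'(x) ≥ 0` everywhere. -/
theorem poisson_derivative_sign_of_even
    (V V' f φ φ' φ'' : ℝ → ℝ)
    (hV : ∀ x, HasDerivAt V (V' x) x)
    (hVint : Integrable (fun x => Real.exp (-V x)))
    (hVsymm : ∀ x, V (-x) = V x)
    (hf_cont : Continuous f)
    (hfsymm : ∀ x, f (-x) = f x)
    (hf_anti : AntitoneOn f (Set.Iic 0))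
    (hfint : Integrable (fun x => f x * Real.exp (-V x)))
    (hfzero : (∫ x : ℝ, f x * Real.exp (-V x)) = 0)
    (hφd : ∀ x, HasDerivAt φ (φ' x) x)
    (hφd' : ∀ x, HasDerivAt φ' (φ'' x) x)
    (hPoisson : ∀ x, φ'' x - V' x * φ' x = -f x)
    (hdecay : Tendsto (fun x => φ' x * Real.exp (-V x)) atBot (nhds 0)) :
    ∀ x : ℝ, 0 ≤ x * φ' x := by
  set w : ℝ → ℝ := fun x => Real.exp (-V x) with hw
  have hwpos : ∀ x, 0 < w x := fun x => Real.exp_pos _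
  have hVc : Continuous V := by
    rw [continuous_iff_continuousAt]; exact fun x => (hV x).continuousAt
  have hwc : Continuous w := Real.continuous_exp.comp hVc.neg
  set g : ℝ → ℝ := fun x => f x * w x with hg
  have hgc : Continuous g := hf_cont.mul hwc
  have hgint : Integrable g := hfint
  set F : ℝ → ℝ := fun x => ∫ t in Set.Iic x, g t with hF
  -- derivative of F
  have hFeq : ∀ y, F y = F 0 + ∫ t in (0:ℝ)..y, g t := by
    intro y
    have h := intervalIntegral.integral_Iic_sub_Iic (f := g) (μ := volume)
      hgint.integrableOn hgint.integrableOn (a := 0) (b := y)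
    simp only [hF] at *
    linarith
  have hFder : ∀ x, HasDerivAt F (g x) x := by
    intro x
    have h2 : HasDerivAt (fun y => F 0 + ∫ t in (0:ℝ)..y, g t) (g x) x :=
      (intervalIntegral.integral_hasDerivAt_right (hgc.intervalIntegrable _ _)
        (hgc.stronglyMeasurableAtFilter _ _) hgc.continuousAt).const_add (F 0)
    have : F = fun y => F 0 + ∫ t in (0:ℝ)..y, g t := funext hFeq
    rw [this]
    exact h2
  -- derivative of H := φ' * w + F is zero
  have hwd : ∀ x, HasDerivAt w (w x * (-V' x)) x := fun x => ((hV x).neg).exp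
  set H : ℝ → ℝ := fun x => φ' x * w x + F x with hH
  have hHd : ∀ x, HasDerivAt H 0 x := by
    intro x
    have h1 := ((hφd' x).mul (hwd x)).add (hFder x)
    have h2 : φ'' x * w x + φ' x * (w x * -V' x) + g x = 0 := by
      have hp := hPoisson x
      simp only [hg]
      nlinarith [hwpos x]
    rwa [h2] at h1
  have hHconst : ∀ x y, H x = H y := fun x y =>
    is_const_of_deriv_eq_zero (fun z => (hHd z).differentiableAt)
      (fun z => (hHd z).deriv) x y
  -- F tends to 0 at -∞
  have hFlim : Tendsto F atBot (nhds 0) := by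
    have h1 : Tendsto (fun y : ℝ => ∫ t in y..(0:ℝ), g t) atBot (nhds (F 0)) :=
      intervalIntegral_tendsto_integral_Iic 0 hgint.integrableOn tendsto_id
    have h2 : ∀ y : ℝ, F y = F 0 - ∫ t in y..(0:ℝ), g t := by
      intro y
      have := hFeq y
      rw [intervalIntegral.integral_symm] at this
      linarith
    have h3 : Tendsto (fun y : ℝ => F 0 - ∫ t in y..(0:ℝ), g t) atBot
        (nhds (F 0 - F 0)) := tendsto_const_nhds.sub h1
    rw [sub_self] at h3
    exact h3.congr (fun y => (h2 y).symm)
  -- H ≡ 0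
  have hHzero : ∀ x, H x = 0 := by
    intro x
    have h1 : Tendsto H atBot (nhds 0) := by
      have := hdecay.add hFlim
      rw [add_zero] at this
      exact this
    have h2 : Tendsto H atBot (nhds (H x)) := by
      have : H = fun _ => H x := funext fun y => hHconst y x
      rw [this]; exact tendsto_const_nhds
    exact tendsto_nhds_unique h2 h1
  -- reflection: F x = - F (-x)
  have hgsymm : ∀ t : ℝ, g (-t) = g t := by
    intro t; simp only [hg, hw, hfsymm, hVsymm]
  have hrefl : ∀ x : ℝ, F x = - F (-x) := by
    intro x
    have h1 : F x + ∫ t in Set.Ioi x, g t = 0 := by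
      rw [hF]
      rw [intervalIntegral.integral_Iic_add_Ioi hgint.integrableOn hgint.integrableOn]
      exact hfzero
    have h2 : (∫ t in Set.Ioi x, g t) = F (-x) := by
      calc (∫ t in Set.Ioi x, g t) = ∫ t in Set.Ioi x, g (-t) := by
            simp_rw [hgsymm]
        _ = ∫ t in Set.Iic (-x), g t := integral_comp_neg_Ioi x g
    rw [h2] at h1
    linarith
  have hF0 : F 0 = 0 := by have := hrefl 0; simp at this; linarith
  -- F ≥ 0 on Iic 0
  have hFpos : ∀ x ≤ (0:ℝ), 0 ≤ F x := by
    intro x hx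
    rcases le_or_gt (f x) 0 with hfx | hfx
    · have h1 : F 0 - F x = ∫ t in x..(0:ℝ), g t := by
        have := intervalIntegral.integral_Iic_sub_Iic (f := g) (μ := volume)
          hgint.integrableOn hgint.integrableOn (a := x) (b := 0)
        linarith
      have h2 : (∫ t in x..(0:ℝ), g t) ≤ 0 := by
        rw [intervalIntegral.integral_of_le hx]
        refine setIntegral_nonpos measurableSet_Ioc ?_
        intro t ht
        have htle : f t ≤ f x := hf_anti (hx) (ht.2 : t ≤ 0) ht.1.le
        exact mul_nonpos_iff.mpr (Or.inr ⟨htle.trans hfx, (hwpos t).le⟩)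
      linarith
    · refine setIntegral_nonneg measurableSet_Iic ?_
      intro t ht
      have htle : f x ≤ f t := hf_anti (le_trans ht hx) hx ht
      exact mul_nonneg (le_trans hfx.le htle) (hwpos t).le
  -- conclude
  intro x
  have hHx := hHzero x
  simp only [hH] at hHx
  rcases le_total x 0 with hx | hx
  · have h1 : φ' x * w x ≤ 0 := by have := hFpos x hx; linarith
    have h2 : φ' x ≤ 0 := by nlinarith [hwpos x]
    nlinarith
  · have h1 : 0 ≤ φ' x * w x := by
      have := hFpos (-x) (by linarith)
      have hr := hrefl x
      linarith
    have h2 : 0 ≤ φ' x := by nlinarith [hwpos x]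
    exact mul_nonneg hx h2
end

section
/- Cumulative-integral sign lemma under even symmetry: Let V : ℝ → ℝ be measurable with V(−x) = V(x) for all x, and let f : ℝ → ℝ satisfy f(−x) = f(x) for all x and be monotonically nonincreasing on (−∞, 0], with x ↦ f(x)e^{−V(x)} Lebesgue-integrable on ℝ and ∫_ℝ f(x)e^{−V(x)} dx = 0. Then for every x ∈ ℝ, x · ∫_{(−∞, x]} f(s)e^{−V(s)} ds ≤ 0. -/
open MeasureTheory Real

/-- Cumulative-integral sign lemma under even symmetry: if `V` and `f` are even, `f` is
nonincreasing on `(-∞, 0]`, and `∫ f e^{-V} = 0`, then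
`x · ∫_{(-∞, x]} f e^{-V} ≤ 0` for every `x`. -/
theorem cumulative_integral_sign_of_even
    (V f : ℝ → ℝ) (hV : Measurable V)
    (hVsymm : ∀ x, V (-x) = V x)
    (hfsymm : ∀ x, f (-x) = f x)
    (hf_anti : AntitoneOn f (Set.Iic 0))
    (hfint : Integrable (fun x => f x * Real.exp (-V x)))
    (hfzero : (∫ x : ℝ, f x * Real.exp (-V x)) = 0) :
    ∀ x : ℝ, x * (∫ s in Set.Iic x, f s * Real.exp (-V s)) ≤ 0 := by
  set g : ℝ → ℝ := fun x => f x * Real.exp (-V x) with hg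
  have hgsymm : ∀ x, g (-x) = g x := by
    intro x; simp [hg, hfsymm x, hVsymm x]
  -- symmetry of tail integrals
  have hsym : ∀ c : ℝ, (∫ s in Set.Iic c, g s) = ∫ s in Set.Ioi (-c), g s := by
    intro c
    rw [← integral_comp_neg_Iic]
    exact setIntegral_congr_fun measurableSet_Iic (fun s _ => (hgsymm s).symm)
  -- split of total integral
  have hsplit : ∀ c : ℝ, (∫ s in Set.Iic c, g s) + (∫ s in Set.Ioi c, g s) = 0 := by
    intro c
    rw [intervalIntegral.integral_Iic_add_Ioi hfint.integrableOn hfint.integrableOn]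
    exact hfzero
  -- half integral is zero
  have hhalf : (∫ s in Set.Iic (0:ℝ), g s) = 0 := by
    have h1 := hsplit 0
    have h2 := hsym 0
    rw [neg_zero] at h2
    rw [← h2] at h1
    linarith
  -- nonnegativity on the left
  have hleft : ∀ x : ℝ, x ≤ 0 → 0 ≤ ∫ s in Set.Iic x, g s := by
    intro x hx
    by_cases hfx : 0 ≤ f x
    · apply setIntegral_nonneg measurableSet_Iic
      intro s hs
      have : f x ≤ f s := hf_anti (le_trans (Set.mem_Iic.mp hs) hx) hx hs
      exact mul_nonneg (le_trans hfx this) (Real.exp_pos _).le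
    · push_neg at hfx
      have hsplit2 : (∫ s in Set.Iic x, g s) + (∫ s in Set.Ioc x 0, g s)
          = ∫ s in Set.Iic (0:ℝ), g s := by
        rw [← setIntegral_union (Set.Iic_disjoint_Ioc le_rfl) measurableSet_Ioc
          hfint.integrableOn hfint.integrableOn, Set.Iic_union_Ioc_eq_Iic hx]
      have hmid : (∫ s in Set.Ioc x 0, g s) ≤ 0 := by
        apply setIntegral_nonpos measurableSet_Ioc
        intro s hs
        have : f s ≤ f x := hf_anti (Set.mem_Iic.mpr hx) (Set.mem_Iic.mpr hs.2) hs.1.le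
        exact mul_nonpos_of_nonpos_of_nonneg (le_of_lt (lt_of_le_of_lt this hfx))
          (Real.exp_pos _).le
      rw [hhalf] at hsplit2
      linarith
  -- nonpositivity on the right
  have hright : ∀ x : ℝ, 0 ≤ x → (∫ s in Set.Iic x, g s) ≤ 0 := by
    intro x hx
    have h1 := hsplit x
    have h2 : (∫ s in Set.Ioi x, g s) = ∫ s in Set.Iic (-x), g s := by
      rw [hsym (-x), neg_neg]
    have h3 := hleft (-x) (neg_nonpos.mpr hx)
    rw [h2] at h1
    linarith
  intro x
  rcases le_or_gt x 0 with hx | hx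
  · exact mul_nonpos_of_nonpos_of_nonneg hx (hleft x hx)
  · exact mul_nonpos_of_nonneg_of_nonpos hx.le (hright x hx.le)
end
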